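/- If a fuzzy graph G has a vertex u with N_s[u] = V (a strong-universal vertex), then γ_snR(G) = 2·min{μ_s(v) : v is strong-universal}. Moreover, such a minimizing strong-universal vertex u satisfies μ_s(u) ≤ μ_s(v) for all v ∈ V. -/

import Mathlib

noncomputable section
open scoped Classical
open Finset

/-- A fuzzy graph on a vertex set `V`. -/
structure FuzzyGraph (V : Type*) where
  σ : V → ℝ
  μ : V → V → ℝ
  σ_nonneg : ∀ v, 0 ≤ σ v
  σ_le_one : ∀ v, σ v ≤ 1
  μ_nonneg : ∀ u v, 0 ≤ μ u v
  μ_symm : ∀ u v, μ u v = μ v u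
  μ_le : ∀ u v, μ u v ≤ min (σ u) (σ v)
  μ_irrefl : ∀ v, μ v v = 0

namespace FuzzyGraph

variable {V : Type*} (G : FuzzyGraph V)

/-- The strength of a walk (given as its list of vertices): the minimum
membership value of its edges (1 for walks without edges). -/
def walkStrength (l : List V) : ℝ :=
  ((l.zip l.tail).map fun p => G.μ p.1 p.2).foldr min 1

/-- `l` is a `u`–`v` walk: it starts at `u`, ends at `v`, and consecutive
vertices are joined by edges of positive membership. -/
def IsWalk (u v : V) (l : List V) : Prop :=
  l.head? = some u ∧ l.getLast? = some v ∧ l.Chain' (fun a b => 0 < G.μ a b)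

/-- `CONN_G(u,v)`: the maximum strength over all `u`–`v` paths. -/
def conn (u v : V) : ℝ :=
  sSup {s | ∃ l : List V, G.IsWalk u v l ∧ 2 ≤ l.length ∧ s = G.walkStrength l}

/-- The edge `(u,v)` is strong. -/
def StrongEdge (u v : V) : Prop :=
  0 < G.μ u v ∧ G.μ u v = G.conn u v

/-- `μ_s(u)`: the minimum membership value among strong edges at `u`
(`0` if `u` has no strong neighbor, via `Real.sInf_empty`). -/
def mus (u : V) : ℝ :=
  sInf {x | ∃ v, G.StrongEdge u v ∧ x = G.μ u v}

/-- The strong neighborhood degree `d_SN(v)`. -/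
def dSN [Fintype V] (v : V) : ℝ :=
  ∑ u ∈ Finset.univ.filter (fun u => G.StrongEdge v u), G.σ u

/-- `D` is a strong dominating set. -/
def IsStrongDomSet (D : Finset V) : Prop :=
  ∀ v, v ∉ D → ∃ u ∈ D, G.StrongEdge v u

/-- The weight of a strong dominating set. -/
def domWeight (D : Finset V) : ℝ := ∑ u ∈ D, G.mus u

/-- The strong domination number `γ_s(G)`. -/
def gammaS [Fintype V] : ℝ :=
  sInf {w | ∃ D : Finset V, G.IsStrongDomSet D ∧ w = G.domWeight D}

/-- `f` is a strong-neighbors Roman dominating function (SNRDF). -/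
def IsSNRDF (f : V → ℕ) : Prop :=
  (∀ v, f v ≤ 2) ∧ ∀ v, f v = 0 → ∃ u, G.StrongEdge v u ∧ f u = 2

/-- The weight of an SNRDF. -/
def snrdfWeight [Fintype V] (f : V → ℕ) : ℝ := ∑ v, (f v : ℝ) * G.mus v

/-- The strong-neighbors Roman domination number `γ_snR(G)`. -/
def gammaSnR [Fintype V] : ℝ :=
  sInf {w | ∃ f : V → ℕ, G.IsSNRDF f ∧ w = G.snrdfWeight f}

/-- The fuzzy subgraph induced by the vertices satisfying `p`. -/
def induce (p : V → Prop) : FuzzyGraph {v // p v} where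
  σ v := G.σ v
  μ u v := G.μ u v
  σ_nonneg v := G.σ_nonneg v
  σ_le_one v := G.σ_le_one v
  μ_nonneg u v := G.μ_nonneg u v
  μ_symm u v := G.μ_symm u v
  μ_le u v := G.μ_le u v
  μ_irrefl v := G.μ_irrefl v

/-- The minimum membership value among the strong edges of `G`. -/
def muMin : ℝ := sInf {x | ∃ u v, G.StrongEdge u v ∧ x = G.μ u v}

/-- The complement of a fuzzy graph. -/
def compl : FuzzyGraph V where
  σ := G.σ
  μ u v := if u = v then 0 else min (G.σ u) (G.σ v) - G.μ u v
  σ_nonneg := G.σ_nonneg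
  σ_le_one := G.σ_le_one
  μ_nonneg u v := by
    by_cases h : u = v
    · simp [h]
    · simp only [if_neg h, sub_nonneg]
      exact G.μ_le u v
  μ_symm u v := by
    by_cases h : u = v
    · simp [h]
    · have h' : ¬ v = u := fun hh => h hh.symm
      simp only [if_neg h, if_neg h', min_comm (G.σ u), G.μ_symm u v]
  μ_le u v := by
    by_cases h : u = v
    · subst h
      simp only [if_pos rfl, le_min_iff]
      exact ⟨G.σ_nonneg u, G.σ_nonneg u⟩
    · simp only [if_neg h]
      have := G.μ_nonneg u v
      linarith
  μ_irrefl v := by simp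

end FuzzyGraph


/-!
A strong-universal vertex `u` is adjacent to both ends of every strong edge `vw`, so the path
`v u w` gives `μ(v,w) = CONN(v,w) ≥ min(μ(v,u), μ(u,w)) ≥ μ_s(u)`; hence `μ_s(u) ≤ μ_s(v)` for
every `v`. The function with value `2` at `u` and `0` elsewhere is an SNRDF of weight `2 μ_s(u)`.
Conversely every SNRDF `f` has `Σ f ≥ 2` as soon as there are two vertices (a zero forces a `2`),
so its weight is at least `μ_s(u) Σ f ≥ 2 μ_s(u)`; with a single vertex `μ_s(u) = 0`.
-/

namespace FuzzyGraph

variable {V : Type*} (G : FuzzyGraph V)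

/-- The vertices of `𝒰_s(G)`: `N_s[u] = V`. -/
def IsStrongUniversal (u : V) : Prop := ∀ w, w ≠ u → G.StrongEdge u w

lemma μ_le_one (u v : V) : G.μ u v ≤ 1 :=
  (G.μ_le u v).trans ((min_le_left _ _).trans (G.σ_le_one u))

lemma le_walkStrength_iff {c : ℝ} :
    ∀ l : List V, c ≤ G.walkStrength l ↔ c ≤ 1 ∧ l.IsChain (fun a b => c ≤ G.μ a b)
  | [] => by simp [walkStrength]
  | [_] => by simp [walkStrength]
  | a :: b :: l => by
    have ih := le_walkStrength_iff (c := c) (b :: l)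
    simp only [walkStrength, List.tail_cons, List.zip_cons_cons, List.map_cons,
      List.foldr_cons] at ih ⊢
    rw [le_min_iff, ih, List.isChain_cons_cons]
    tauto

lemma walkStrength_le_one (l : List V) : G.walkStrength l ≤ 1 :=
  ((G.le_walkStrength_iff l).1 le_rfl).1

lemma walkStrength_reverse (l : List V) : G.walkStrength l.reverse = G.walkStrength l := by
  have reverse_le : ∀ l : List V, G.walkStrength l ≤ G.walkStrength l.reverse := fun l => by
    obtain ⟨h1, hchain⟩ := (G.le_walkStrength_iff l).1 le_rfl
    refine (G.le_walkStrength_iff _).2 ⟨h1, List.isChain_reverse.2 (hchain.imp ?_)⟩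
    intro a b hab
    rwa [G.μ_symm]
  exact le_antisymm (by simpa using reverse_le l.reverse) (reverse_le l)

lemma IsWalk.reverse {u v : V} {l : List V} (h : G.IsWalk u v l) : G.IsWalk v u l.reverse := by
  obtain ⟨hhead, hlast, hchain⟩ := h
  refine ⟨by rwa [List.head?_reverse], by rwa [List.getLast?_reverse], ?_⟩
  refine List.isChain_reverse.2 (List.IsChain.imp ?_ hchain)
  intro a b hab
  rwa [G.μ_symm]

lemma conn_symm (u v : V) : G.conn u v = G.conn v u := by
  suffices h : ∀ u v : V,
      {s | ∃ l, G.IsWalk u v l ∧ 2 ≤ l.length ∧ s = G.walkStrength l} ⊆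
        {s | ∃ l, G.IsWalk v u l ∧ 2 ≤ l.length ∧ s = G.walkStrength l} from
    congrArg sSup ((h u v).antisymm (h v u))
  rintro u v _ ⟨l, hw, hl, rfl⟩
  exact ⟨l.reverse, hw.reverse, by simpa using hl, (G.walkStrength_reverse l).symm⟩

lemma walkStrength_le_conn {u v : V} {l : List V} (hw : G.IsWalk u v l) (hl : 2 ≤ l.length) :
    G.walkStrength l ≤ G.conn u v :=
  le_csSup ⟨1, by rintro _ ⟨l', -, -, rfl⟩; exact G.walkStrength_le_one l'⟩ ⟨l, hw, hl, rfl⟩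

lemma StrongEdge.symm {G : FuzzyGraph V} {u v : V} (h : G.StrongEdge u v) : G.StrongEdge v u :=
  ⟨G.μ_symm u v ▸ h.1, by rw [← G.μ_symm, h.2, G.conn_symm]⟩

lemma StrongEdge.ne {G : FuzzyGraph V} {u v : V} (h : G.StrongEdge u v) : u ≠ v := by
  rintro rfl
  exact (G.μ_irrefl u ▸ h.1).false

lemma StrongEdge.min_le {G : FuzzyGraph V} {v w : V} (h : G.StrongEdge v w) {u : V}
    (hvu : 0 < G.μ v u) (huw : 0 < G.μ u w) : min (G.μ v u) (G.μ u w) ≤ G.μ v w := by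
  have hwalk : G.IsWalk v w [v, u, w] := ⟨rfl, rfl, List.isChain_cons_cons.2 ⟨hvu, List.isChain_pair.2 huw⟩⟩
  have hstrength : min (G.μ v u) (G.μ u w) ≤ G.walkStrength [v, u, w] := by
    refine (G.le_walkStrength_iff _).2 ⟨(min_le_left _ _).trans (G.μ_le_one v u), ?_⟩
    simp
  rw [h.2]
  exact hstrength.trans (G.walkStrength_le_conn hwalk (by simp))

lemma mus_nonneg (u : V) : 0 ≤ G.mus u :=
  Real.sInf_nonneg fun _ ⟨w, _, hx⟩ => hx ▸ G.μ_nonneg u w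

lemma mus_le {u v : V} (h : G.StrongEdge u v) : G.mus u ≤ G.μ u v :=
  csInf_le ⟨0, fun _ ⟨w, _, hx⟩ => hx ▸ G.μ_nonneg u w⟩ ⟨v, h, rfl⟩

lemma mus_eq_zero_of_subsingleton [Subsingleton V] (u : V) : G.mus u = 0 := by
  have hempty : {x | ∃ v, G.StrongEdge u v ∧ x = G.μ u v} = ∅ :=
    Set.eq_empty_of_forall_notMem fun _ ⟨v, hv, _⟩ => hv.ne (Subsingleton.elim u v)
  rw [mus, hempty, Real.sInf_empty]

variable {G}

lemma IsStrongUniversal.mus_le_μ {u : V} (hu : G.IsStrongUniversal u) {v w : V}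
    (h : G.StrongEdge v w) : G.mus u ≤ G.μ v w := by
  by_cases hvu : v = u
  · exact hvu ▸ G.mus_le h
  by_cases hwu : w = u
  · subst hwu
    exact G.μ_symm w v ▸ G.mus_le (hu v hvu)
  have huv := hu v hvu
  have huw := hu w hwu
  calc G.mus u ≤ min (G.μ v u) (G.μ u w) :=
        le_min (G.μ_symm u v ▸ G.mus_le huv) (G.mus_le huw)
    _ ≤ G.μ v w := h.min_le (G.μ_symm u v ▸ huv.1) huw.1

lemma IsStrongUniversal.mus_le_mus {u : V} (hu : G.IsStrongUniversal u) (v : V) :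
    G.mus u ≤ G.mus v := by
  rcases eq_or_ne v u with rfl | hvu
  · exact le_rfl
  exact le_csInf ⟨_, u, (hu v hvu).symm, rfl⟩ fun _ ⟨w, hw, hx⟩ => hx ▸ hu.mus_le_μ hw

lemma IsStrongUniversal.sInf_mus_eq {u : V} (hu : G.IsStrongUniversal u) :
    sInf {x | ∃ v, G.IsStrongUniversal v ∧ x = G.mus v} = G.mus u :=
  IsLeast.csInf_eq ⟨⟨u, hu, rfl⟩, fun _ ⟨v, _, hx⟩ => hx ▸ hu.mus_le_mus v⟩

lemma IsSNRDF.two_le_sum [Fintype V] [Nontrivial V] {f : V → ℕ} (hf : G.IsSNRDF f) :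
    2 ≤ ∑ v, f v := by
  by_cases hzero : ∃ v, f v = 0
  · obtain ⟨v, hv⟩ := hzero
    obtain ⟨w, -, hw⟩ := hf.2 v hv
    exact hw ▸ Finset.single_le_sum (fun _ _ => Nat.zero_le _) (Finset.mem_univ w)
  · push Not at hzero
    obtain ⟨a, b, hab⟩ := exists_pair_ne V
    calc 2 ≤ f a + f b := by have := hzero a; have := hzero b; omega
      _ = ∑ v ∈ {a, b}, f v := (Finset.sum_pair hab).symm
      _ ≤ ∑ v, f v := Finset.sum_le_sum_of_subset (Finset.subset_univ _)

lemma snrdfWeight_nonneg [Fintype V] (f : V → ℕ) : 0 ≤ G.snrdfWeight f :=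
  Finset.sum_nonneg fun v _ => mul_nonneg (Nat.cast_nonneg _) (G.mus_nonneg v)

lemma mul_sum_le_snrdfWeight [Fintype V] {m : ℝ} (hm : ∀ v, m ≤ G.mus v) (f : V → ℕ) :
    m * ∑ v, (f v : ℝ) ≤ G.snrdfWeight f := by
  rw [Finset.mul_sum]
  exact Finset.sum_le_sum fun v _ => by
    rw [mul_comm]
    exact mul_le_mul_of_nonneg_left (hm v) (Nat.cast_nonneg _)

lemma IsStrongUniversal.isSNRDF_two_at {u : V} (hu : G.IsStrongUniversal u) :
    G.IsSNRDF fun v => if v = u then 2 else 0 := by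
  refine ⟨fun v => by dsimp only; split_ifs <;> omega, fun v hv => ⟨u, ?_, by simp⟩⟩
  have hvu : v ≠ u := by rintro rfl; simp at hv
  exact (hu v hvu).symm

lemma IsStrongUniversal.two_mul_mus_le_snrdfWeight [Fintype V] {u : V}
    (hu : G.IsStrongUniversal u) {f : V → ℕ} (hf : G.IsSNRDF f) :
    2 * G.mus u ≤ G.snrdfWeight f := by
  rcases subsingleton_or_nontrivial V with hV | hV
  · simpa [G.mus_eq_zero_of_subsingleton u] using G.snrdfWeight_nonneg f
  calc 2 * G.mus u ≤ G.mus u * ∑ v, (f v : ℝ) := by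
        rw [mul_comm]
        exact mul_le_mul_of_nonneg_left (by exact_mod_cast hf.two_le_sum) (G.mus_nonneg u)
    _ ≤ G.snrdfWeight f := G.mul_sum_le_snrdfWeight hu.mus_le_mus f

lemma IsStrongUniversal.gammaSnR_eq [Fintype V] {u : V} (hu : G.IsStrongUniversal u) :
    G.gammaSnR = 2 * G.mus u := by
  refine IsLeast.csInf_eq ⟨⟨_, hu.isSNRDF_two_at, ?_⟩, fun _ ⟨f, hf, hw⟩ =>
    hw ▸ hu.two_mul_mus_le_snrdfWeight hf⟩
  simp [snrdfWeight, Finset.sum_ite_eq']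

end FuzzyGraph

/-- if `G` has a strong-universal vertex then
`γ_snR(G) = 2·min{μ_s(v) : v strong-universal}`, and any minimizing
strong-universal vertex has globally minimal `μ_s`. -/
theorem gammaSnR_of_universal {V : Type*} [Fintype V]
    (G : FuzzyGraph V) (hu : ∃ u : V, ∀ v, v ≠ u → G.StrongEdge u v) :
    G.gammaSnR =
        2 * sInf {x | ∃ v : V, (∀ w, w ≠ v → G.StrongEdge v w) ∧ x = G.mus v} ∧
      ∀ u : V, (∀ w, w ≠ u → G.StrongEdge u w) →
        G.mus u =
          sInf {x | ∃ v : V, (∀ w, w ≠ v → G.StrongEdge v w) ∧ x = G.mus v} →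
        ∀ v : V, G.mus u ≤ G.mus v := by
  obtain ⟨u, hu⟩ := hu
  have huniv : G.IsStrongUniversal u := hu
  exact ⟨huniv.gammaSnR_eq.trans (congrArg (2 * ·) huniv.sInf_mus_eq.symm),
    fun v hv _ => FuzzyGraph.IsStrongUniversal.mus_le_mus hv⟩
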